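/- arXiv:1806.11337 — 4 statements merged into one kernel-verified Lean document; each statement's English description precedes it below -/
import Mathlib

section
/- Let p be an odd prime and ε a non-square in 𝔽_p. The set C_{ns+} = C_ns ∪ {invertible matrices of the form (a b; −εb −a)} is a subgroup of GL₂(𝔽_p); it equals the normalizer of C_ns in GL₂(𝔽_p), and the index of C_ns in C_{ns+} is 2 (equivalently, C_{ns+} has cardinality 2(p² − 1)). -/
/-!
With `J = (0 1; ε 0)`, the set `C_ns` is the centralizer of `J` in `GL₂(𝔽_p)` and the other
half of `C_{ns+}` is the set of `g` with `g J = -(J g)`; so `C_{ns+} = {g | g J g⁻¹ = ±J}`, a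
subgroup that normalizes the centralizer. Conversely, if `g` normalizes `C_ns` then `k = g J g⁻¹`
lies in `C_ns` and `k² = J² = ε` is scalar; since `ε` is a non-square, every nonzero `a + bJ` is
invertible, so `(k + J)(k - J) = 0` forces `k = ±J`. The index is `2` because `diag(1, -1)`
anticommutes with `J` and in odd characteristic no unit equals its negative, and `|C_ns| = p² - 1`
counts the nonzero `a + bJ`.
-/

/-- The non-split Cartan set inside `GL₂(𝔽_p)`: invertible matrices of the
form `(a b; εb a)`. -/
def CnsSet (p : ℕ) [Fact (Nat.Prime p)] (ε : ZMod p) : Set (GL (Fin 2) (ZMod p)) :=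
  {M | (M : Matrix (Fin 2) (Fin 2) (ZMod p)) 1 1 = (M : Matrix (Fin 2) (Fin 2) (ZMod p)) 0 0 ∧
       (M : Matrix (Fin 2) (Fin 2) (ZMod p)) 1 0 = ε * (M : Matrix (Fin 2) (Fin 2) (ZMod p)) 0 1}

/-- Invertible matrices of the form `(a b; -εb -a)`. -/
def CnsOtherSet (p : ℕ) [Fact (Nat.Prime p)] (ε : ZMod p) : Set (GL (Fin 2) (ZMod p)) :=
  {M | (M : Matrix (Fin 2) (Fin 2) (ZMod p)) 1 1 = -(M : Matrix (Fin 2) (Fin 2) (ZMod p)) 0 0 ∧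
       (M : Matrix (Fin 2) (Fin 2) (ZMod p)) 1 0 = -ε * (M : Matrix (Fin 2) (Fin 2) (ZMod p)) 0 1}

open Matrix Subgroup

section SignedCentralizer

variable {G : Type*} [Group G] [HasDistribNeg G] {j : G}

def signedCentralizer (j : G) : Subgroup G where
  carrier := {g | g * j = j * g ∨ g * j = -(j * g)}
  one_mem' := Or.inl (by simp)
  mul_mem' := by
    rintro g h (hg | hg) (hh | hh) <;> [left; right; right; left] <;>
      simp only [mul_assoc, hh, ← mul_assoc g j, hg, neg_mul, mul_neg, neg_neg]
  inv_mem' := by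
    rintro g (hg | hg)
    · exact Or.inl (Commute.inv_left hg)
    · right
      rw [inv_mul_eq_iff_eq_mul, mul_neg, ← mul_assoc, hg, neg_mul, neg_neg, mul_inv_cancel_right]

theorem mem_signedCentralizer {g : G} :
    g ∈ signedCentralizer j ↔ g * j = j * g ∨ g * j = -(j * g) := Iff.rfl

theorem centralizer_le_signedCentralizer : centralizer {j} ≤ signedCentralizer j :=
  fun _ hg ↦ Or.inl (mem_centralizer_singleton_iff.mp hg)

theorem signedCentralizer_le_normalizer :
    signedCentralizer j ≤ normalizer (centralizer {j} : Set G) := by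
  intro g hg x
  have hconj : g⁻¹ * j * g = j ∨ g⁻¹ * j * g = -j := by
    rcases hg with hg | hg
    · left; rw [mul_assoc, ← hg, inv_mul_cancel_left]
    · right; rw [mul_assoc, ← neg_eq_iff_eq_neg.mpr hg, mul_neg, inv_mul_cancel_left]
  have key : Commute x (g⁻¹ * j * g) ↔ Commute (g * x * g⁻¹) j := by
    rw [← Commute.conj_iff g]; group
  simp only [SetLike.mem_coe, mem_centralizer_singleton_iff]
  change Commute x j ↔ Commute (g * x * g⁻¹) j
  rcases hconj with h | h <;> rw [← key, h]
  exact Commute.neg_right_iff.symm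

theorem normalizer_centralizer_le_signedCentralizer (hj : j * j ∈ center G)
    (hsqrt : ∀ k ∈ centralizer {j}, k * k = j * j → k = j ∨ k = -j) :
    normalizer (centralizer {j} : Set G) ≤ signedCentralizer j := by
  intro g hg
  have hk : g * j * g⁻¹ ∈ centralizer {j} :=
    (mem_normalizer_iff.mp hg j).mp (mem_centralizer_singleton_iff.mpr rfl)
  have hsq : g * j * g⁻¹ * (g * j * g⁻¹) = j * j := by
    rw [show g * j * g⁻¹ * (g * j * g⁻¹) = g * (j * j) * g⁻¹ by group,
      mem_center_iff.mp hj g, mul_inv_cancel_right]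
  rcases hsqrt _ hk hsq with h | h
  · exact Or.inl (mul_inv_eq_iff_eq_mul.mp h)
  · exact Or.inr ((mul_inv_eq_iff_eq_mul.mp h).trans (neg_mul j g))

theorem relIndex_centralizer_signedCentralizer {w : G} (hw : w * j = -(j * w))
    (hneg : ∀ g : G, g ≠ -g) : (centralizer {j}).relIndex (signedCentralizer j) = 2 := by
  refine relIndex_eq_two_iff_exists_notMem_and.mpr ⟨w, Or.inr hw, fun hw' ↦ ?_, ?_⟩
  · exact hneg _ ((mem_centralizer_singleton_iff.mp hw').symm.trans hw)
  · rintro b (hb | hb)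
    · exact Or.inr (mem_centralizer_singleton_iff.mpr hb)
    · left
      rw [mem_centralizer_singleton_iff, mul_assoc, hw, mul_neg, ← mul_assoc, hb, neg_mul, neg_neg,
        mul_assoc]

end SignedCentralizer

section CartanGen

variable {K : Type*} [Field K] {ε : K}

def cartanGen (ε : K) : Matrix (Fin 2) (Fin 2) K := !![0, 1; ε, 0]

theorem cartanGen_mul_self (ε : K) : cartanGen ε * cartanGen ε = ε • 1 := by
  ext i j; fin_cases i <;> fin_cases j <;> simp [cartanGen]

theorem commute_cartanGen_iff {A : Matrix (Fin 2) (Fin 2) K} :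
    Commute A (cartanGen ε) ↔ A 1 1 = A 0 0 ∧ A 1 0 = ε * A 0 1 := by
  rw [Commute, SemiconjBy, ← Matrix.ext_iff, Fin.forall_fin_two, Fin.forall_fin_two,
    Fin.forall_fin_two]
  simp only [cartanGen, Matrix.mul_apply, Fin.sum_univ_two, of_apply, cons_val', cons_val_zero,
    cons_val_one, cons_val_fin_one]
  grind

theorem mul_cartanGen_eq_neg_iff {A : Matrix (Fin 2) (Fin 2) K} :
    A * cartanGen ε = -(cartanGen ε * A) ↔ A 1 1 = -A 0 0 ∧ A 1 0 = -ε * A 0 1 := by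
  rw [← Matrix.ext_iff, Fin.forall_fin_two, Fin.forall_fin_two, Fin.forall_fin_two]
  simp only [cartanGen, Matrix.mul_apply, Fin.sum_univ_two, of_apply, cons_val', cons_val_zero,
    cons_val_one, cons_val_fin_one, Matrix.neg_apply]
  grind

theorem eq_of_commute_cartanGen {A B : Matrix (Fin 2) (Fin 2) K} (hA : Commute A (cartanGen ε))
    (hB : Commute B (cartanGen ε)) (h₀₀ : A 0 0 = B 0 0) (h₀₁ : A 0 1 = B 0 1) : A = B := by
  rw [commute_cartanGen_iff] at hA hB
  ext i j; fin_cases i <;> fin_cases j <;> simp [hA.1, hA.2, hB.1, hB.2, h₀₀, h₀₁]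

theorem sq_sub_mul_sq_ne_zero (hε : ¬ ∃ x : K, x ^ 2 = ε) {a b : K} (hab : (a, b) ≠ 0) :
    a ^ 2 - ε * b ^ 2 ≠ 0 := by
  intro h
  by_cases hb : b = 0
  · subst hb
    exact hab (by simpa using h)
  · exact hε ⟨a / b, by field_simp; linear_combination h⟩

theorem isUnit_of_commute_cartanGen (hε : ¬ ∃ x : K, x ^ 2 = ε) {A : Matrix (Fin 2) (Fin 2) K}
    (hA : Commute A (cartanGen ε)) (hA₀ : A ≠ 0) : IsUnit A := by
  have hrow : (A 0 0, A 0 1) ≠ 0 := fun h ↦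
    hA₀ (eq_of_commute_cartanGen hA (Commute.zero_left _) (congr_arg Prod.fst h)
      (congr_arg Prod.snd h))
  rw [isUnit_iff_isUnit_det, isUnit_iff_ne_zero, det_fin_two, (commute_cartanGen_iff.mp hA).1,
    (commute_cartanGen_iff.mp hA).2]
  convert sq_sub_mul_sq_ne_zero hε hrow using 1
  ring

def cartanGenUnit (hε : ε ≠ 0) : GL (Fin 2) K :=
  GeneralLinearGroup.mkOfDetNeZero (cartanGen ε) (by simpa [cartanGen, det_fin_two_of] using hε)

variable (hε : ε ≠ 0)

@[simp]
theorem val_cartanGenUnit : (cartanGenUnit hε : Matrix (Fin 2) (Fin 2) K) = cartanGen ε := rfl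

theorem mem_centralizer_cartanGenUnit_iff {g : GL (Fin 2) K} :
    g ∈ centralizer {cartanGenUnit hε} ↔ Commute (g : Matrix (Fin 2) (Fin 2) K) (cartanGen ε) := by
  rw [mem_centralizer_singleton_iff, Units.ext_iff]
  rfl

theorem mem_signedCentralizer_cartanGenUnit_iff {g : GL (Fin 2) K} :
    g ∈ signedCentralizer (cartanGenUnit hε) ↔
      Commute (g : Matrix (Fin 2) (Fin 2) K) (cartanGen ε) ∨
        (g : Matrix (Fin 2) (Fin 2) K) * cartanGen ε = -(cartanGen ε * g) := by
  rw [mem_signedCentralizer, Units.ext_iff, Units.ext_iff]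
  rfl

theorem cartanGenUnit_mul_self_mem_center :
    cartanGenUnit hε * cartanGenUnit hε ∈ center (GL (Fin 2) K) := by
  refine mem_center_iff.mpr fun g ↦ Units.ext ?_
  simp only [Units.val_mul]
  rw [val_cartanGenUnit, cartanGen_mul_self, Matrix.mul_smul, Matrix.smul_mul, mul_one, one_mul]

theorem eq_or_eq_neg_of_mem_centralizer_cartanGenUnit (hsq : ¬ ∃ x : K, x ^ 2 = ε) :
    ∀ k ∈ centralizer {cartanGenUnit hε},
      k * k = cartanGenUnit hε * cartanGenUnit hε →
        k = cartanGenUnit hε ∨ k = -cartanGenUnit hε := by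
  intro k hk hkk
  have hk' := (mem_centralizer_cartanGenUnit_iff hε).mp hk
  have hprod : ((k : Matrix (Fin 2) (Fin 2) K) + cartanGen ε) * (k - cartanGen ε) = 0 := by
    rw [← hk'.mul_self_sub_mul_self_eq, sub_eq_zero]
    exact congr_arg Units.val hkk
  by_cases hdiff : (k : Matrix (Fin 2) (Fin 2) K) - cartanGen ε = 0
  · exact Or.inl (Units.ext (sub_eq_zero.mp hdiff))
  · have hunit := isUnit_of_commute_cartanGen hsq (hk'.sub_left (Commute.refl _)) hdiff
    exact Or.inr (Units.ext (eq_neg_of_add_eq_zero_left (hunit.mul_left_eq_zero.mp hprod)))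

theorem card_centralizer_cartanGenUnit [Fintype K] (hsq : ¬ ∃ x : K, x ^ 2 = ε) :
    Nat.card (centralizer {cartanGenUnit hε}) = Fintype.card K ^ 2 - 1 := by
  classical
  let firstRow (g : centralizer {cartanGenUnit hε}) : {v : K × K // v ≠ 0} :=
    ⟨((g.1 : Matrix (Fin 2) (Fin 2) K) 0 0, (g.1 : Matrix (Fin 2) (Fin 2) K) 0 1), fun h ↦
      (g : GL (Fin 2) K).ne_zero (eq_of_commute_cartanGen
        ((mem_centralizer_cartanGenUnit_iff hε).mp g.2) (Commute.zero_left _)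
        (congr_arg Prod.fst h) (congr_arg Prod.snd h))⟩
  have hbij : Function.Bijective firstRow := by
    constructor
    · intro g h hgh
      obtain ⟨h₀₀, h₀₁⟩ := Prod.ext_iff.mp (congr_arg Subtype.val hgh)
      exact Subtype.ext (Units.ext (eq_of_commute_cartanGen
        ((mem_centralizer_cartanGenUnit_iff hε).mp g.2)
        ((mem_centralizer_cartanGenUnit_iff hε).mp h.2) h₀₀ h₀₁))
    · rintro ⟨⟨a, b⟩, hab⟩
      have hA : Commute !![a, b; ε * b, a] (cartanGen ε) := commute_cartanGen_iff.mpr (by simp)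
      have hA₀ : !![a, b; ε * b, a] ≠ 0 := fun h ↦
        hab (Prod.ext (congr_fun (congr_fun h 0) 0) (congr_fun (congr_fun h 0) 1))
      exact ⟨⟨(isUnit_of_commute_cartanGen hsq hA hA₀).unit,
        (mem_centralizer_cartanGenUnit_iff hε).mpr hA⟩, rfl⟩
  rw [Nat.card_congr (Equiv.ofBijective firstRow hbij), Nat.card_eq_fintype_card,
    Fintype.card_subtype_compl, Fintype.card_subtype_eq, Fintype.card_prod, sq]

/-- Conjugation by it is the Galois involution `a + bJ ↦ a - bJ` of `K[J]`, `J = cartanGen ε`. -/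
def cartanConjugation : GL (Fin 2) K :=
  GeneralLinearGroup.mkOfDetNeZero !![1, 0; 0, -1] (by simp [det_fin_two_of])

theorem cartanConjugation_mul_cartanGenUnit :
    cartanConjugation * cartanGenUnit hε = -(cartanGenUnit hε * cartanConjugation) :=
  Units.ext (mul_cartanGen_eq_neg_iff.mpr (by simp [cartanConjugation]))

end CartanGen

theorem Matrix.GeneralLinearGroup.ne_neg_self {n K : Type*} [Fintype n] [DecidableEq n]
    [Nonempty n] [Field K] (hK : ringChar K ≠ 2) (g : GL n K) : g ≠ -g := by
  intro h
  have h2g : (2 : K) • (g : Matrix n n K) = 0 := by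
    rw [two_smul]
    nth_rewrite 2 [h]
    rw [Units.val_neg, add_neg_cancel]
  exact g.ne_zero ((smul_eq_zero.mp h2g).resolve_left (Ring.two_ne_zero hK))

section NonsplitCartan

variable {p : ℕ} [Fact p.Prime] {ε : ZMod p} (hε : ε ≠ 0)

theorem coe_centralizer_cartanGenUnit :
    (centralizer {cartanGenUnit hε} : Set (GL (Fin 2) (ZMod p))) = CnsSet p ε := by
  ext g
  exact (mem_centralizer_cartanGenUnit_iff hε).trans commute_cartanGen_iff

theorem coe_signedCentralizer_cartanGenUnit :
    (signedCentralizer (cartanGenUnit hε) : Set (GL (Fin 2) (ZMod p))) =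
      CnsSet p ε ∪ CnsOtherSet p ε := by
  ext g
  exact (mem_signedCentralizer_cartanGenUnit_iff hε).trans
    (or_congr commute_cartanGen_iff mul_cartanGen_eq_neg_iff)

end NonsplitCartan

/-- `C_{ns+} = C_ns ∪ {(a b; -εb -a)}` is a subgroup of `GL₂(𝔽_p)`, equal to the
normalizer of `C_ns`; the index of `C_ns` in `C_{ns+}` is `2`, equivalently
`C_{ns+}` has cardinality `2(p² - 1)`. -/
theorem nonsplit_cartan_normalizer (p : ℕ) [Fact (Nat.Prime p)] (hp : Odd p)
    (ε : ZMod p) (hε : ¬ ∃ x : ZMod p, x ^ 2 = ε) :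
    ∃ H Hplus : Subgroup (GL (Fin 2) (ZMod p)),
      (H : Set (GL (Fin 2) (ZMod p))) = CnsSet p ε ∧
      (Hplus : Set (GL (Fin 2) (ZMod p))) = CnsSet p ε ∪ CnsOtherSet p ε ∧
      Hplus = Subgroup.normalizer (H : Set (GL (Fin 2) (ZMod p))) ∧
      H.relIndex Hplus = 2 ∧
      Nat.card Hplus = 2 * (p ^ 2 - 1) := by
  have hε₀ : ε ≠ 0 := by
    rintro rfl
    exact hε ⟨0, zero_pow two_ne_zero⟩
  have hchar : ringChar (ZMod p) ≠ 2 := by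
    rw [ZMod.ringChar_zmod_n]
    exact hp.ne_two_of_dvd_nat dvd_rfl
  have hidx := relIndex_centralizer_signedCentralizer (cartanConjugation_mul_cartanGenUnit hε₀)
    (GeneralLinearGroup.ne_neg_self hchar)
  refine ⟨centralizer {cartanGenUnit hε₀}, signedCentralizer (cartanGenUnit hε₀),
    coe_centralizer_cartanGenUnit hε₀, coe_signedCentralizer_cartanGenUnit hε₀,
    le_antisymm signedCentralizer_le_normalizer
      (normalizer_centralizer_le_signedCentralizer (cartanGenUnit_mul_self_mem_center hε₀)
        (eq_or_eq_neg_of_mem_centralizer_cartanGenUnit hε₀ hε)), hidx, ?_⟩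
  rw [← relIndex_bot_left,
    ← relIndex_mul_relIndex _ _ _ bot_le centralizer_le_signedCentralizer, hidx, relIndex_bot_left,
    card_centralizer_cartanGenUnit hε₀ hε, ZMod.card, mul_comm]
end

section
/- Let p be an odd prime, ε a non-square in 𝔽_p, and let Z denote the subgroup of C_ns consisting of the scalar matrices λ·I with λ ∈ 𝔽_p^×. The quotient group C_ns/Z has exactly one element of order 2, namely the class of the matrix J = (0 1; ε 0). -/
open Matrix

section CartanMatrix

variable {K : Type*} [CommRing K] {ε : K} {M : Matrix (Fin 2) (Fin 2) K}

theorem exists_units_smul_one_iff_of_cartan (hM : IsUnit M) (h11 : M 1 1 = M 0 0)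
    (h10 : M 1 0 = ε * M 0 1) : (∃ u : Kˣ, M = (u : K) • 1) ↔ M 0 1 = 0 := by
  constructor
  · rintro ⟨u, rfl⟩
    simp
  · intro h01
    have hM_eq : M = M 0 0 • 1 := by
      ext i j
      fin_cases i <;> fin_cases j <;> simp [h11, h10, h01]
    have hunit : IsUnit (M 0 0) := by
      rw [hM_eq, isUnit_iff_isUnit_det, det_smul, det_one, mul_one] at hM
      exact isUnit_pow_iff (by norm_num) |>.mp hM
    exact ⟨hunit.unit, hM_eq⟩

theorem cartan_mul_self_apply_zero_one (h11 : M 1 1 = M 0 0) :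
    (M * M) 0 1 = 2 * M 0 0 * M 0 1 := by
  simp [mul_apply, Fin.sum_univ_two, h11]
  ring

theorem cartan_mul_self_apply_zero_one_eq_zero_and_ne_iff [IsDomain K] (h2 : (2 : K) ≠ 0)
    (hM : IsUnit M) (h11 : M 1 1 = M 0 0) (h10 : M 1 0 = ε * M 0 1) :
    ((M * M) 0 1 = 0 ∧ M 0 1 ≠ 0) ↔ M 0 0 = 0 := by
  rw [cartan_mul_self_apply_zero_one h11]
  constructor
  · rintro ⟨h, hb⟩
    simpa [h2, hb] using h
  · intro ha
    refine ⟨by simp [ha], fun hb => hM.ne_zero ?_⟩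
    ext i j
    fin_cases i <;> fin_cases j <;> simp [ha, hb, h11, h10]

end CartanMatrix

namespace QuotientGroup

variable {G : Type*} [Group G] {N : Subgroup G} [N.Normal]

theorem orderOf_mk_eq_two_iff (g : G) : orderOf (g : G ⧸ N) = 2 ↔ g * g ∈ N ∧ g ∉ N := by
  rw [orderOf_eq_prime_iff, sq, ← mk_mul, Ne, eq_one_iff, eq_one_iff]

theorem mk_eq_mk_iff_mul_mem_of_mul_self_mem {g h : G} (hg : g * g ∈ N) :
    (h : G ⧸ N) = g ↔ h * g ∈ N := by
  have hinv : (g : G ⧸ N)⁻¹ = g := inv_eq_of_mul_eq_one_right (by rwa [← mk_mul, eq_one_iff])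
  rw [← hinv, eq_inv_iff_mul_eq_one, ← mk_mul, eq_one_iff]

end QuotientGroup

theorem nonsplit_cartan_quotient_unique_order_two_general (p : ℕ) [Fact (Nat.Prime p)]
    (hp : Odd p) (ε : ZMod p)
    (H : Subgroup (GL (Fin 2) (ZMod p)))
    (hH : (H : Set (GL (Fin 2) (ZMod p))) = CnsSet p ε)
    (Z : Subgroup H)
    (hZ : (Z : Set H) = {M : H | ∃ u : (ZMod p)ˣ,
      ((M : GL (Fin 2) (ZMod p)) : Matrix (Fin 2) (Fin 2) (ZMod p)) =
        (u : ZMod p) • (1 : Matrix (Fin 2) (Fin 2) (ZMod p))})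
    [Z.Normal]
    (J : H)
    (hJ : ((J : GL (Fin 2) (ZMod p)) : Matrix (Fin 2) (Fin 2) (ZMod p)) = !![0, 1; ε, 0]) :
    ∀ x : H ⧸ Z, orderOf x = 2 ↔ x = QuotientGroup.mk J := by
  have h2 : (2 : ZMod p) ≠ 0 := Ring.two_ne_zero <| by
    rw [ZMod.ringChar_zmod_n]
    rintro rfl
    exact absurd hp (by decide)
  have hcns (N : H) : (N : GL (Fin 2) (ZMod p)) ∈ CnsSet p ε := hH ▸ N.2
  have hmemZ (N : H) : N ∈ Z ↔
      ((N : GL (Fin 2) (ZMod p)) : Matrix (Fin 2) (Fin 2) (ZMod p)) 0 1 = 0 := by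
    rw [← SetLike.mem_coe, hZ]
    exact exists_units_smul_one_iff_of_cartan (Units.isUnit _) (hcns N).1 (hcns N).2
  have hJJ : J * J ∈ Z := by
    simp [hmemZ, hJ, mul_apply, Fin.sum_univ_two]
  intro x
  obtain ⟨M, rfl⟩ := QuotientGroup.mk_surjective x
  have hMJ : (((M * J : H) : GL (Fin 2) (ZMod p)) : Matrix (Fin 2) (Fin 2) (ZMod p)) 0 1 =
      ((M : GL (Fin 2) (ZMod p)) : Matrix (Fin 2) (Fin 2) (ZMod p)) 0 0 := by
    simp [hJ, mul_apply, Fin.sum_univ_two]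
  rw [QuotientGroup.orderOf_mk_eq_two_iff, QuotientGroup.mk_eq_mk_iff_mul_mem_of_mul_self_mem hJJ,
    hmemZ, hmemZ, hmemZ, hMJ, Subgroup.coe_mul, Units.val_mul]
  exact cartan_mul_self_apply_zero_one_eq_zero_and_ne_iff h2 (Units.isUnit _) (hcns M).1 (hcns M).2

/-- Let `H = C_ns` and let `Z ≤ H` be the subgroup of nonzero scalar matrices.
The quotient `C_ns/Z` has exactly one element of order `2`, namely the class of
`J = (0 1; ε 0)`. -/
theorem nonsplit_cartan_quotient_unique_order_two (p : ℕ) [Fact (Nat.Prime p)]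
    (hp : Odd p) (ε : ZMod p) (hε : ¬ ∃ x : ZMod p, x ^ 2 = ε)
    (H : Subgroup (GL (Fin 2) (ZMod p)))
    (hH : (H : Set (GL (Fin 2) (ZMod p))) = CnsSet p ε)
    (Z : Subgroup H)
    (hZ : (Z : Set H) = {M : H | ∃ u : (ZMod p)ˣ,
      ((M : GL (Fin 2) (ZMod p)) : Matrix (Fin 2) (Fin 2) (ZMod p)) =
        (u : ZMod p) • (1 : Matrix (Fin 2) (Fin 2) (ZMod p))})
    [Z.Normal]
    (J : H)
    (hJ : ((J : GL (Fin 2) (ZMod p)) : Matrix (Fin 2) (Fin 2) (ZMod p)) = !![0, 1; ε, 0]) :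
    ∀ x : H ⧸ Z, orderOf x = 2 ↔ x = QuotientGroup.mk J :=
  nonsplit_cartan_quotient_unique_order_two_general p hp ε H hH Z hZ J hJ
end

section
/- Let p be an odd prime and ε a non-square in 𝔽_p. The index of the subgroup C_{ns+} ∩ C_{s+} in the group C_{ns+} equals (p + 1)/2; equivalently, 2 · |C_{ns+} ∩ C_{s+}| · (p + 1)/2 = 2 · |C_{ns+}|, i.e., |C_{ns+}| = ((p+1)/2) · |C_{ns+} ∩ C_{s+}| where (p+1)/2 denotes the natural number (p+1)/2. -/
/-- `C_{ns+} = C_ns ∪ {(a b; -εb -a)}`. -/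
def CnsPlusSet (p : ℕ) [Fact (Nat.Prime p)] (ε : ZMod p) : Set (GL (Fin 2) (ZMod p)) :=
  CnsSet p ε ∪ CnsOtherSet p ε

/-- The split Cartan set: invertible diagonal matrices. -/
def CsSet (p : ℕ) [Fact (Nat.Prime p)] : Set (GL (Fin 2) (ZMod p)) :=
  {M | (M : Matrix (Fin 2) (Fin 2) (ZMod p)) 0 1 = 0 ∧
       (M : Matrix (Fin 2) (Fin 2) (ZMod p)) 1 0 = 0}

/-- Invertible antidiagonal matrices. -/
def AntidiagSet (p : ℕ) [Fact (Nat.Prime p)] : Set (GL (Fin 2) (ZMod p)) :=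
  {M | (M : Matrix (Fin 2) (Fin 2) (ZMod p)) 0 0 = 0 ∧
       (M : Matrix (Fin 2) (Fin 2) (ZMod p)) 1 1 = 0}

/-- `C_{s+} = C_s ∪ {invertible antidiagonal matrices}`. -/
def CsPlusSet (p : ℕ) [Fact (Nat.Prime p)] : Set (GL (Fin 2) (ZMod p)) :=
  CsSet p ∪ AntidiagSet p

/-! For `p` odd, `C_{ns+}` consists exactly of the matrices `(a b; sεb sa)` with `s = ±1` and
`(a, b) ≠ 0`, and the matrix determines `(s, a, b)`; since `ε` is not a square these are all
invertible, so `|C_{ns+}| = 2(p² - 1)`. Such a matrix lies in `C_{s+}` iff `ab = 0`, which leaves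
`2 · 2(p - 1)` elements in the intersection, and the index is the quotient `(p + 1)/2`. -/

section FiniteRing

variable {R : Type*} [Fintype R] [DecidableEq R]

lemma card_prod_ne_zero [Zero R] :
    Fintype.card {q : R × R // q ≠ 0} = Fintype.card R ^ 2 - 1 := by
  rw [Fintype.card_subtype_compl, Fintype.card_prod, Fintype.card_subtype_eq, sq]

lemma card_prod_ne_zero_mul_eq_zero [MulZeroClass R] [NoZeroDivisors R] :
    Fintype.card {q : R × R // q ≠ 0 ∧ q.1 * q.2 = 0} = 2 * (Fintype.card R - 1) := by
  have axes : (Finset.univ.filter fun q : R × R => q ≠ 0 ∧ q.1 * q.2 = 0) =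
      (Finset.univ.erase 0 ×ˢ {0}) ∪ ({0} ×ˢ Finset.univ.erase 0) := by
    ext ⟨a, b⟩
    simp only [Finset.mem_filter, Finset.mem_univ, true_and, ne_eq, Prod.mk_eq_zero,
      mul_eq_zero, Finset.mem_union, Finset.mem_product, Finset.mem_erase,
      Finset.mem_singleton, and_true]
    tauto
  have disjoint : Disjoint (Finset.univ.erase (0 : R) ×ˢ {(0 : R)})
      ({0} ×ˢ Finset.univ.erase 0) := by
    simp only [Finset.disjoint_left, Finset.mem_product, Finset.mem_erase,
      Finset.mem_singleton]
    rintro ⟨a, b⟩ ⟨⟨ha, -⟩, -⟩ ⟨rfl, -⟩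
    exact ha rfl
  rw [Fintype.card_subtype, axes, Finset.card_union_of_disjoint disjoint,
    Finset.card_product, Finset.card_product, Finset.card_erase_of_mem (Finset.mem_univ _)]
  simp only [Finset.card_singleton, Finset.card_univ]
  ring

end FiniteRing

lemma sq_sub_mul_sq_ne_zero_s15 {K : Type*} [Field K] {ε : K} (hε : ¬ ∃ x : K, x ^ 2 = ε)
    {q : K × K} (hq : q ≠ 0) : q.1 ^ 2 - ε * q.2 ^ 2 ≠ 0 := by
  intro h
  by_cases hb : q.2 = 0
  · exact hq (Prod.ext (pow_eq_zero_iff two_ne_zero |>.mp (by simpa [hb] using h)) hb)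
  · exact hε ⟨q.1 / q.2, by field_simp; linear_combination h⟩

lemma ne_zero_of_not_exists_sq {K : Type*} [MonoidWithZero K] {ε : K}
    (hε : ¬ ∃ x : K, x ^ 2 = ε) : ε ≠ 0 :=
  fun h => hε ⟨0, by simp [h]⟩

lemma Int.cast_units_ne_zero {R : Type*} [Ring R] [Nontrivial R] (s : ℤˣ) : ((s : ℤ) : R) ≠ 0 :=
  (s.isUnit.map (Int.castRingHom R)).ne_zero

lemma Int.cast_units_injective {R : Type*} [Ring R] [Nontrivial R] (hR : ringChar R ≠ 2) :
    Function.Injective fun s : ℤˣ => ((s : ℤ) : R) := by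
  have := Ring.neg_one_ne_one_of_char_ne_two hR
  intro s t h
  rcases Int.units_eq_one_or s with rfl | rfl <;> rcases Int.units_eq_one_or t with rfl | rfl <;>
    simp_all [eq_comm]

section CartanPlus

variable {p : ℕ} [Fact (Nat.Prime p)] {ε : ZMod p}

open Matrix

def cartanPlusMatrix (ε : ZMod p) (s : ℤˣ) (q : ZMod p × ZMod p) : Matrix (Fin 2) (Fin 2) (ZMod p) :=
  !![q.1, q.2; s * (ε * q.2), s * q.1]

lemma det_cartanPlusMatrix (s : ℤˣ) (q : ZMod p × ZMod p) :
    (cartanPlusMatrix ε s q).det = s * (q.1 ^ 2 - ε * q.2 ^ 2) := by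
  rw [cartanPlusMatrix, det_fin_two_of]
  ring

lemma mem_CnsPlusSet_iff {M : GL (Fin 2) (ZMod p)} :
    M ∈ CnsPlusSet p ε ↔ ∃ s : ℤˣ, (M : Matrix (Fin 2) (Fin 2) (ZMod p)) 1 1 = s * M 0 0 ∧
      (M : Matrix (Fin 2) (Fin 2) (ZMod p)) 1 0 = s * (ε * M 0 1) := by
  simp only [CnsPlusSet, CnsSet, CnsOtherSet, Set.mem_union, Set.mem_ofPred_eq]
  constructor
  · rintro (h | h)
    · exact ⟨1, by simpa using h⟩
    · exact ⟨-1, by simpa using h⟩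
  · rintro ⟨s, h⟩
    rcases Int.units_eq_one_or s with rfl | rfl
    · exact Or.inl (by simpa using h)
    · exact Or.inr (by simpa using h)

variable (hε : ¬ ∃ x : ZMod p, x ^ 2 = ε)
include hε

lemma det_cartanPlusMatrix_ne_zero (s : ℤˣ) {q : ZMod p × ZMod p} (hq : q ≠ 0) :
    (cartanPlusMatrix ε s q).det ≠ 0 := by
  rw [det_cartanPlusMatrix]
  exact mul_ne_zero (Int.cast_units_ne_zero s) (sq_sub_mul_sq_ne_zero_s15 hε hq)

def cartanPlus (s : ℤˣ) (q : ZMod p × ZMod p) (hq : q ≠ 0) : GL (Fin 2) (ZMod p) :=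
  GeneralLinearGroup.mkOfDetNeZero _ (det_cartanPlusMatrix_ne_zero hε s hq)

lemma mem_CnsPlusSet_iff_exists_cartanPlus {M : GL (Fin 2) (ZMod p)} :
    M ∈ CnsPlusSet p ε ↔ ∃ s q, ∃ hq : q ≠ 0, cartanPlus hε s q hq = M := by
  rw [mem_CnsPlusSet_iff]
  constructor
  · rintro ⟨s, h11, h10⟩
    have hM : (M : Matrix (Fin 2) (Fin 2) (ZMod p)) =
        cartanPlusMatrix ε s ((M : Matrix (Fin 2) (Fin 2) (ZMod p)) 0 0, M 0 1) := by
      rw [eta_fin_two (M : Matrix (Fin 2) (Fin 2) (ZMod p)), h11, h10]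
      rfl
    have hq : ((M : Matrix (Fin 2) (Fin 2) (ZMod p)) 0 0, M 0 1) ≠ 0 := by
      intro h0
      have := M.isUnit.map detMonoidHom
      rw [Prod.mk_eq_zero] at h0
      simp [hM, det_cartanPlusMatrix, h0] at this
    exact ⟨s, _, hq, Units.ext hM.symm⟩
  · rintro ⟨s, q, hq, rfl⟩
    exact ⟨s, rfl, rfl⟩

lemma eq_and_eq_of_cartanPlus_eq (hp : p ≠ 2) {s s' : ℤˣ} {q q' : ZMod p × ZMod p} {hq : q ≠ 0}
    {hq' : q' ≠ 0} (h : cartanPlus hε s q hq = cartanPlus hε s' q' hq') : s = s' ∧ q = q' := by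
  have hM := congrArg (fun M : GL (Fin 2) (ZMod p) => (M : Matrix (Fin 2) (Fin 2) (ZMod p))) h
  have hq_eq : q = q' := Prod.ext (congrFun (congrFun hM 0) 0) (congrFun (congrFun hM 0) 1)
  subst hq_eq
  have h10 : ((s : ZMod p) - s') * (ε * q.2) = 0 := by
    rw [sub_mul, sub_eq_zero]
    exact congrFun (congrFun hM 1) 0
  have h11 : ((s : ZMod p) - s') * q.1 = 0 := by
    rw [sub_mul, sub_eq_zero]
    exact congrFun (congrFun hM 1) 1
  refine ⟨Int.cast_units_injective (by rwa [ZMod.ringChar_zmod_n]) (sub_eq_zero.1 ?_), rfl⟩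
  by_contra hs
  exact hq (Prod.ext ((mul_eq_zero.1 h11).resolve_left hs)
    ((mul_eq_zero.1 ((mul_eq_zero.1 h10).resolve_left hs)).resolve_left
      (ne_zero_of_not_exists_sq hε)))

lemma cartanPlus_mem_CsPlusSet_iff (s : ℤˣ) {q : ZMod p × ZMod p} (hq : q ≠ 0) :
    cartanPlus hε s q hq ∈ CsPlusSet p ↔ q.1 * q.2 = 0 := by
  have hε0 := ne_zero_of_not_exists_sq hε
  have hs0 := Int.cast_units_ne_zero (R := ZMod p) s
  simp [CsPlusSet, CsSet, AntidiagSet, cartanPlus, cartanPlusMatrix, mul_eq_zero, or_comm, hε0, hs0]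

end CartanPlus

section Counting

variable {p : ℕ} [Fact (Nat.Prime p)] {ε : ZMod p}

lemma card_range_cartanPlus (hp : p ≠ 2) (hε : ¬ ∃ x : ZMod p, x ^ 2 = ε)
    {P : ZMod p × ZMod p → Prop} (hP : ∀ q, P q → q ≠ 0) :
    Nat.card (Set.range fun x : ℤˣ × {q // P q} => cartanPlus hε x.1 x.2.1 (hP _ x.2.2)) =
      2 * Nat.card {q // P q} := by
  rw [Nat.card_range_of_injective, Nat.card_prod, Nat.card_eq_fintype_card (α := ℤˣ),
    Fintype.card_units_int]
  rintro ⟨s, q, hq⟩ ⟨s', q', hq'⟩ h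
  obtain ⟨rfl, rfl⟩ := eq_and_eq_of_cartanPlus_eq hε hp h
  rfl

lemma card_CnsPlusSet (hp : p ≠ 2) (hε : ¬ ∃ x : ZMod p, x ^ 2 = ε) :
    Nat.card (CnsPlusSet p ε) = 2 * (p ^ 2 - 1) := by
  have hrange : (Set.range fun x : ℤˣ × {q : ZMod p × ZMod p // q ≠ 0} =>
      cartanPlus hε x.1 x.2.1 x.2.2) = CnsPlusSet p ε := by
    ext M
    simp [mem_CnsPlusSet_iff_exists_cartanPlus hε]
  rw [← hrange, card_range_cartanPlus hp hε (fun _ hq => hq), Nat.card_eq_fintype_card,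
    card_prod_ne_zero, ZMod.card]

lemma card_CnsPlusSet_inter_CsPlusSet (hp : p ≠ 2) (hε : ¬ ∃ x : ZMod p, x ^ 2 = ε) :
    Nat.card (CnsPlusSet p ε ∩ CsPlusSet p : Set (GL (Fin 2) (ZMod p))) = 2 * (2 * (p - 1)) := by
  have hrange : (Set.range fun x : ℤˣ × {q : ZMod p × ZMod p // q ≠ 0 ∧ q.1 * q.2 = 0} =>
      cartanPlus hε x.1 x.2.1 x.2.2.1) = CnsPlusSet p ε ∩ CsPlusSet p := by
    ext M
    simp only [Set.mem_range, Set.mem_inter_iff, mem_CnsPlusSet_iff_exists_cartanPlus hε]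
    constructor
    · rintro ⟨⟨s, q, hq, hq_axes⟩, rfl⟩
      exact ⟨⟨s, q, hq, rfl⟩, (cartanPlus_mem_CsPlusSet_iff hε s hq).2 hq_axes⟩
    · rintro ⟨⟨s, q, hq, rfl⟩, hCs⟩
      exact ⟨⟨s, q, hq, (cartanPlus_mem_CsPlusSet_iff hε s hq).1 hCs⟩, rfl⟩
  rw [← hrange, card_range_cartanPlus hp hε (fun _ hq => hq.1), Nat.card_eq_fintype_card,
    card_prod_ne_zero_mul_eq_zero, ZMod.card]

end Counting

lemma eq_succ_div_two_of_mul_eq {n p : ℕ} (hp : 1 < p)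
    (h : n * (2 * (2 * (p - 1))) = 2 * (p ^ 2 - 1)) : n = (p + 1) / 2 := by
  have hsq : p ^ 2 - 1 = (p + 1) * (p - 1) := by simpa using Nat.sq_sub_sq p 1
  rw [hsq] at h
  have : n * 4 = 2 * (p + 1) :=
    Nat.eq_of_mul_eq_mul_right (Nat.sub_pos_of_lt hp) (by linarith)
  omega

/-- The index of `C_{ns+} ∩ C_{s+}` in `C_{ns+}` is `(p+1)/2`; equivalently
`|C_{ns+}| = ((p+1)/2) · |C_{ns+} ∩ C_{s+}|` (with `(p+1)/2` natural number
division). -/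
theorem index_of_intersection_in_nonsplit_plus (p : ℕ) [Fact (Nat.Prime p)]
    (hp : Odd p) (ε : ZMod p) (hε : ¬ ∃ x : ZMod p, x ^ 2 = ε)
    (Hns Hs : Subgroup (GL (Fin 2) (ZMod p)))
    (hHns : (Hns : Set (GL (Fin 2) (ZMod p))) = CnsPlusSet p ε)
    (hHs : (Hs : Set (GL (Fin 2) (ZMod p))) = CsPlusSet p) :
    (Hns ⊓ Hs).relIndex Hns = (p + 1) / 2 ∧
    Nat.card Hns = ((p + 1) / 2) * Nat.card (Hns ⊓ Hs : Subgroup (GL (Fin 2) (ZMod p))) := by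
  have hp2 : p ≠ 2 := by
    rintro rfl
    exact absurd hp (by decide)
  have hcard_mul : Nat.card (Hns ⊓ Hs : Subgroup _) * (Hns ⊓ Hs).relIndex Hns = Nat.card Hns := by
    simpa [Subgroup.relIndex_bot_left] using
      Subgroup.relIndex_mul_relIndex ⊥ (Hns ⊓ Hs) Hns bot_le inf_le_left
  have hcard_ns : Nat.card Hns = 2 * (p ^ 2 - 1) := by
    rw [← card_CnsPlusSet hp2 hε, ← hHns]
    rfl
  have hcard_inf : Nat.card (Hns ⊓ Hs : Subgroup _) = 2 * (2 * (p - 1)) := by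
    rw [← card_CnsPlusSet_inter_CsPlusSet hp2 hε, ← hHns, ← hHs, ← Subgroup.coe_inf]
    rfl
  have hindex : (Hns ⊓ Hs).relIndex Hns = (p + 1) / 2 := by
    refine eq_succ_div_two_of_mul_eq (Fact.out : p.Prime).one_lt ?_
    rw [← hcard_inf, ← hcard_ns, mul_comm, hcard_mul]
  exact ⟨hindex, by rw [← hindex, ← hcard_mul, mul_comm]⟩
end

section
/- Let p be an odd prime and ε a non-square in 𝔽_p. For any two elements g, h ∈ C_ns, the product g⁻¹h lies in C_{s+} if and only if g⁻¹h is a scalar matrix λ·I with λ ∈ 𝔽_p^× or g⁻¹h = λ·(0 1; ε 0) for some λ ∈ 𝔽_p^×. Consequently, the relation "g⁻¹h ∈ C_{s+}" partitions C_ns into classes each of cardinality exactly 2(p − 1). -/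
section Aux
variable {p : ℕ} [Fact (Nat.Prime p)] {ε : ZMod p}

lemma cns_mul {g h : GL (Fin 2) (ZMod p)} (hg : g ∈ CnsSet p ε) (hh : h ∈ CnsSet p ε) :
    g * h ∈ CnsSet p ε := by
  obtain ⟨hg1, hg2⟩ := hg
  obtain ⟨hh1, hh2⟩ := hh
  constructor <;>
  · simp only [Matrix.GeneralLinearGroup.coe_mul, Matrix.mul_apply, Fin.sum_univ_two] at *
    rw [hg1, hg2, hh1, hh2]; ring

lemma cns_inv {g : GL (Fin 2) (ZMod p)} (hg : g ∈ CnsSet p ε) :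
    g⁻¹ ∈ CnsSet p ε := by
  obtain ⟨hg1, hg2⟩ := hg
  have hc : ((g⁻¹ : GL (Fin 2) (ZMod p)) : Matrix (Fin 2) (Fin 2) (ZMod p)) =
      ((g : Matrix (Fin 2) (Fin 2) (ZMod p)))⁻¹ := Matrix.coe_units_inv g
  refine ⟨?_, ?_⟩
  · rw [hc, Matrix.inv_def, Matrix.adjugate_fin_two]
    simp [hg1, hg2]
  · rw [hc, Matrix.inv_def, Matrix.adjugate_fin_two]
    simp [hg1, hg2]
    ring

/-- scalar unit in GL₂ -/
def sU (p : ℕ) [Fact (Nat.Prime p)] (u : (ZMod p)ˣ) : GL (Fin 2) (ZMod p) :=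
  ⟨(u : ZMod p) • 1, ((u⁻¹ : (ZMod p)ˣ) : ZMod p) • 1,
   by rw [smul_mul_smul_comm, mul_one, Units.mul_inv, one_smul],
   by rw [smul_mul_smul_comm, mul_one, Units.inv_mul, one_smul]⟩

lemma sU_val (u : (ZMod p)ˣ) : ((sU p u : GL (Fin 2) (ZMod p)) : Matrix (Fin 2) (Fin 2) (ZMod p))
    = (u : ZMod p) • 1 := rfl

/-- the antidiagonal unit J -/
def Jgl (p : ℕ) [Fact (Nat.Prime p)] (ε : ZMod p) (hε : ε ≠ 0) : GL (Fin 2) (ZMod p) :=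
  ⟨!![0, 1; ε, 0], !![0, ε⁻¹; 1, 0],
   by rw [Matrix.mul_fin_two, Matrix.one_fin_two]; simp [mul_inv_cancel₀ hε],
   by rw [Matrix.mul_fin_two, Matrix.one_fin_two]; simp [inv_mul_cancel₀ hε]⟩

lemma Jgl_val (hε : ε ≠ 0) :
    ((Jgl p ε hε : GL (Fin 2) (ZMod p)) : Matrix (Fin 2) (Fin 2) (ZMod p)) = !![0, 1; ε, 0] := rfl

lemma sUJ_val (u : (ZMod p)ˣ) (hε : ε ≠ 0) :
    ((sU p u * Jgl p ε hε : GL (Fin 2) (ZMod p)) : Matrix (Fin 2) (Fin 2) (ZMod p)) =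
      (u : ZMod p) • !![0, 1; ε, 0] := by
  rw [Matrix.GeneralLinearGroup.coe_mul, sU_val, Jgl_val, smul_mul_assoc, one_mul]

end Aux


/-- For `g, h ∈ C_ns`, the product `g⁻¹h` lies in `C_{s+}` if and only if it is
a nonzero scalar matrix `λ·I` or equals `λ·(0 1; ε 0)` for some `λ ∈ 𝔽_p^×`.
Consequently the relation `g⁻¹h ∈ C_{s+}` partitions `C_ns` into classes each
of cardinality exactly `2(p-1)`. -/
theorem nonsplit_cartan_coset_relation (p : ℕ) [Fact (Nat.Prime p)]
    (hp : Odd p) (ε : ZMod p) (hε : ¬ ∃ x : ZMod p, x ^ 2 = ε) :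
    (∀ g h : GL (Fin 2) (ZMod p), g ∈ CnsSet p ε → h ∈ CnsSet p ε →
      (g⁻¹ * h ∈ CsPlusSet p ↔
        (∃ u : (ZMod p)ˣ,
          ((g⁻¹ * h : GL (Fin 2) (ZMod p)) : Matrix (Fin 2) (Fin 2) (ZMod p)) =
            (u : ZMod p) • (1 : Matrix (Fin 2) (Fin 2) (ZMod p)) ∨
          ((g⁻¹ * h : GL (Fin 2) (ZMod p)) : Matrix (Fin 2) (Fin 2) (ZMod p)) =
            (u : ZMod p) • !![0, 1; ε, 0]))) ∧
    (∀ g : GL (Fin 2) (ZMod p), g ∈ CnsSet p ε →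
      Nat.card {h : GL (Fin 2) (ZMod p) | h ∈ CnsSet p ε ∧ g⁻¹ * h ∈ CsPlusSet p} =
        2 * (p - 1)) := by
  have hε0 : ε ≠ 0 := fun h => hε ⟨0, by simp [h]⟩
  have key : ∀ M : GL (Fin 2) (ZMod p), M ∈ CnsSet p ε →
      (M ∈ CsPlusSet p ↔ ∃ u : (ZMod p)ˣ,
        ((M : GL (Fin 2) (ZMod p)) : Matrix (Fin 2) (Fin 2) (ZMod p)) =
            (u : ZMod p) • (1 : Matrix (Fin 2) (Fin 2) (ZMod p)) ∨
        ((M : GL (Fin 2) (ZMod p)) : Matrix (Fin 2) (Fin 2) (ZMod p)) =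
            (u : ZMod p) • !![0, 1; ε, 0]) := by
    intro M hM
    obtain ⟨hM1, hM2⟩ := hM
    have hdet : IsUnit ((M : Matrix (Fin 2) (Fin 2) (ZMod p)).det) :=
      (Matrix.isUnit_iff_isUnit_det _).mp M.isUnit
    rw [Matrix.det_fin_two] at hdet
    constructor
    · rintro (⟨h01, h10⟩ | ⟨h00, h11⟩)
      · -- diagonal case
        have ha : (M : Matrix (Fin 2) (Fin 2) (ZMod p)) 0 0 ≠ 0 := by
          intro h0
          rw [h0, h01] at hdet
          simp [hM1, h0] at hdet
        refine ⟨Units.mk0 _ ha, Or.inl ?_⟩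
        ext i j
        fin_cases i <;> fin_cases j <;>
          simp [Matrix.one_apply, h01, h10, hM1]
      · -- antidiagonal case
        have hb : (M : Matrix (Fin 2) (Fin 2) (ZMod p)) 0 1 ≠ 0 := by
          intro h0
          rw [h0, h00] at hdet
          simp at hdet
        refine ⟨Units.mk0 _ hb, Or.inr ?_⟩
        ext i j
        fin_cases i <;> fin_cases j <;>
          simp [h00, h11, hM2, mul_comm]
    · rintro ⟨u, hu | hu⟩
      · exact Or.inl ⟨by rw [hu]; simp [Matrix.one_apply], by rw [hu]; simp [Matrix.one_apply]⟩
      · exact Or.inr ⟨by rw [hu]; simp, by rw [hu]; simp⟩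
  constructor
  · intro g h hg hh
    exact key _ (cns_mul (cns_inv hg) hh)
  · intro g hg
    have hJ : Jgl p ε hε0 ∈ CnsSet p ε := by
      constructor <;> simp [Jgl_val]
    have hsU : ∀ u : (ZMod p)ˣ, sU p u ∈ CnsSet p ε := by
      intro u
      constructor <;> simp [sU_val, Matrix.one_apply]
    let f : (ZMod p)ˣ ⊕ (ZMod p)ˣ →
        {h : GL (Fin 2) (ZMod p) | h ∈ CnsSet p ε ∧ g⁻¹ * h ∈ CsPlusSet p} := fun x =>
      match x with
      | Sum.inl u => ⟨g * sU p u, cns_mul hg (hsU u), by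
          rw [inv_mul_cancel_left]
          exact Or.inl ⟨by simp [sU_val, Matrix.one_apply], by simp [sU_val, Matrix.one_apply]⟩⟩
      | Sum.inr u => ⟨g * (sU p u * Jgl p ε hε0), cns_mul hg (cns_mul (hsU u) hJ), by
          rw [inv_mul_cancel_left]
          exact Or.inr ⟨by rw [sUJ_val]; simp, by rw [sUJ_val]; simp⟩⟩
    have hbij : Function.Bijective f := by
      constructor
      · intro x y hxy
        rcases x with u | u <;> rcases y with v | v <;>
          simp only [f, Subtype.mk.injEq] at hxy <;>
          have h3 := mul_left_cancel hxy
        · have h4 : ((sU p u : GL (Fin 2) (ZMod p)) : Matrix (Fin 2) (Fin 2) (ZMod p)) =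
              ((sU p v : GL (Fin 2) (ZMod p)) : Matrix (Fin 2) (Fin 2) (ZMod p)) :=
            congrArg _ h3
          rw [sU_val, sU_val] at h4
          have h5 := congrFun (congrFun h4 0) 0
          simp [Matrix.one_apply] at h5
          exact congrArg Sum.inl (Units.ext h5)
        · have h4 : ((sU p u : GL (Fin 2) (ZMod p)) : Matrix (Fin 2) (Fin 2) (ZMod p)) =
              ((sU p v * Jgl p ε hε0 : GL (Fin 2) (ZMod p)) :
                Matrix (Fin 2) (Fin 2) (ZMod p)) := congrArg _ h3
          rw [sU_val, sUJ_val] at h4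
          have h5 := congrFun (congrFun h4 0) 0
          simp [Matrix.one_apply] at h5
        · have h4 : ((sU p u * Jgl p ε hε0 : GL (Fin 2) (ZMod p)) :
              Matrix (Fin 2) (Fin 2) (ZMod p)) =
              ((sU p v : GL (Fin 2) (ZMod p)) : Matrix (Fin 2) (Fin 2) (ZMod p)) :=
            congrArg _ h3
          rw [sUJ_val, sU_val] at h4
          have h5 := congrFun (congrFun h4 0) 0
          simp [Matrix.one_apply] at h5
          exact absurd h5.symm v.ne_zero
        · have h4 : ((sU p u * Jgl p ε hε0 : GL (Fin 2) (ZMod p)) :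
              Matrix (Fin 2) (Fin 2) (ZMod p)) =
              ((sU p v * Jgl p ε hε0 : GL (Fin 2) (ZMod p)) :
                Matrix (Fin 2) (Fin 2) (ZMod p)) := congrArg _ h3
          rw [sUJ_val, sUJ_val] at h4
          have h5 := congrFun (congrFun h4 0) 1
          simp at h5
          exact congrArg Sum.inr (Units.ext h5)
      · rintro ⟨h, hh, hcs⟩
        obtain ⟨u, hu | hu⟩ := (key _ (cns_mul (cns_inv hg) hh)).mp hcs
        · refine ⟨Sum.inl u, ?_⟩
          have : g⁻¹ * h = sU p u := Units.ext (by rw [hu, sU_val])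
          have h6 : g * sU p u = h := by rw [← this, mul_inv_cancel_left]
          exact Subtype.ext h6
        · refine ⟨Sum.inr u, ?_⟩
          have : g⁻¹ * h = sU p u * Jgl p ε hε0 := Units.ext (by rw [hu, sUJ_val])
          have h6 : g * (sU p u * Jgl p ε hε0) = h := by rw [← this, mul_inv_cancel_left]
          exact Subtype.ext h6
    rw [← Nat.card_eq_of_bijective f hbij, Nat.card_sum, Nat.card_eq_fintype_card,
      ZMod.card_units]
    omega
end
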